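/- arXiv:2207.08336 — 4 statements merged into one kernel-verified Lean document; each statement's English description precedes it below -/
import Mathlib

section
/- Let (Ω, μ) be a probability space, ℰ a finite type, and E : Ω → ℰ, A' : Ω → Bool, Ã : Ω → Bool, Y : Ω → Bool random variables. Assume: (pos) for every i ∈ Bool, μ(A' = i ∧ Y = true) > 0, and for every j ∈ Bool, μ(Ã = j ∧ Y = true) > 0; (1) μ(Ã = true | A' = true ∧ Y = true) ≠ μ(Ã = true | A' = false ∧ Y = true); (2) for all e ∈ ℰ and i, j ∈ Bool, μ(E = e ∧ A' = i | Ã = j ∧ Y = true) = μ(E = e | Ã = j ∧ Y = true) · μ(A' = i | Ã = j ∧ Y = true); (3) for all e ∈ ℰ, μ(E = e | A' = true ∧ Y = true) = μ(E = e | A' = false ∧ Y = true). Then for all e ∈ ℰ, μ(E = e | Ã = true ∧ Y = true) = μ(E = e | Ã = false ∧ Y = true). -/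
open MeasureTheory ProbabilityTheory
open scoped ENNReal

private lemma cond_toReal_aux {Ω : Type*} [MeasurableSpace Ω] (μ : Measure Ω) [IsFiniteMeasure μ]
    {s : Set Ω} (hs : MeasurableSet s) (t : Set Ω) :
    ((μ[|s]) t).toReal = (μ (s ∩ t)).toReal / (μ s).toReal := by
  rw [cond_apply hs μ t, ENNReal.toReal_mul, ENNReal.toReal_inv]
  ring

private lemma cond_ne_top_aux {Ω : Type*} [MeasurableSpace Ω] (μ : Measure Ω) [IsFiniteMeasure μ]
    {s : Set Ω} (hs : MeasurableSet s) (hs0 : μ s ≠ 0) (t : Set Ω) :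
    (μ[|s]) t ≠ ⊤ := by
  rw [cond_apply hs μ t]
  exact ENNReal.mul_ne_top (ENNReal.inv_ne_top.2 hs0) (measure_ne_top μ _)

/-- If (1) the correction is not totally random on the positive class, (2) the
representation `E` and corrected attribute `A'` are conditionally independent
given the ground-truth attribute `Ã` on the positive class, and (3) the
conditional distribution of `E` is identical across the two corrected-attribute
groups on the positive class, then the conditional distribution of `E` is
identical across the two ground-truth-attribute groups on the positive class. -/
theorem stmt_9 {Ω : Type*} [MeasurableSpace Ω] (μ : Measure Ω) [IsProbabilityMeasure μ]
    {ℰ : Type*} [Fintype ℰ] [MeasurableSpace ℰ] [MeasurableSingletonClass ℰ]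
    (E : Ω → ℰ) (A' : Ω → Bool) (Atil : Ω → Bool) (Y : Ω → Bool)
    (hE : Measurable E) (hA' : Measurable A') (hAtil : Measurable Atil)
    (hY : Measurable Y)
    (hposA : ∀ i : Bool, 0 < μ ({ω | A' ω = i} ∩ {ω | Y ω = true}))
    (hposAtil : ∀ j : Bool, 0 < μ ({ω | Atil ω = j} ∩ {ω | Y ω = true}))
    (h1 : (μ[|{ω | A' ω = true} ∩ {ω | Y ω = true}]) {ω | Atil ω = true}
        ≠ (μ[|{ω | A' ω = false} ∩ {ω | Y ω = true}]) {ω | Atil ω = true})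
    (h2 : ∀ (e : ℰ) (i j : Bool),
      (μ[|{ω | Atil ω = j} ∩ {ω | Y ω = true}]) ({ω | E ω = e} ∩ {ω | A' ω = i})
        = (μ[|{ω | Atil ω = j} ∩ {ω | Y ω = true}]) {ω | E ω = e}
          * (μ[|{ω | Atil ω = j} ∩ {ω | Y ω = true}]) {ω | A' ω = i})
    (h3 : ∀ e : ℰ,
      (μ[|{ω | A' ω = true} ∩ {ω | Y ω = true}]) {ω | E ω = e}
        = (μ[|{ω | A' ω = false} ∩ {ω | Y ω = true}]) {ω | E ω = e}) :
    ∀ e : ℰ,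
      (μ[|{ω | Atil ω = true} ∩ {ω | Y ω = true}]) {ω | E ω = e}
        = (μ[|{ω | Atil ω = false} ∩ {ω | Y ω = true}]) {ω | E ω = e} := by
  intro e
  have hYs : MeasurableSet {ω | Y ω = true} := hY (measurableSet_singleton true)
  have hAs : ∀ i : Bool, MeasurableSet {ω | A' ω = i} :=
    fun i => hA' (measurableSet_singleton i)
  have hTs : ∀ j : Bool, MeasurableSet {ω | Atil ω = j} :=
    fun j => hAtil (measurableSet_singleton j)
  have hEs : MeasurableSet {ω | E ω = e} := hE (measurableSet_singleton e)
  have hSs : ∀ j : Bool, MeasurableSet ({ω | Atil ω = j} ∩ {ω | Y ω = true}) :=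
    fun j => (hTs j).inter hYs
  have hCs : ∀ i : Bool, MeasurableSet ({ω | A' ω = i} ∩ {ω | Y ω = true}) :=
    fun i => (hAs i).inter hYs
  -- partition over Atil
  have split : ∀ s : Set Ω,
      μ s = μ (s ∩ {ω | Atil ω = true}) + μ (s ∩ {ω | Atil ω = false}) := by
    intro s
    have hc : {ω | Atil ω = false} = {ω | Atil ω = true}ᶜ := by
      ext ω; simp
    rw [hc, ← Set.diff_eq]
    exact (measure_inter_add_diff s (hTs true)).symm
  -- real-valued quantities
  set w : Bool → ℝ := fun j => (μ ({ω | Atil ω = j} ∩ {ω | Y ω = true})).toReal with hw_def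
  set c : Bool → ℝ := fun i => (μ ({ω | A' ω = i} ∩ {ω | Y ω = true})).toReal with hc_def
  set q : Bool → Bool → ℝ :=
    fun i j => (μ (({ω | Atil ω = j} ∩ {ω | Y ω = true}) ∩ {ω | A' ω = i})).toReal with hq_def
  set r : Bool → ℝ :=
    fun j => (μ (({ω | Atil ω = j} ∩ {ω | Y ω = true}) ∩ {ω | E ω = e})).toReal with hr_def
  set m : Bool → Bool → ℝ :=
    fun i j => (μ (({ω | Atil ω = j} ∩ {ω | Y ω = true})
      ∩ ({ω | E ω = e} ∩ {ω | A' ω = i}))).toReal with hm_def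
  have hwpos : ∀ j, 0 < w j := fun j =>
    ENNReal.toReal_pos (hposAtil j).ne' (measure_ne_top μ _)
  have hcpos : ∀ i, 0 < c i := fun i =>
    ENNReal.toReal_pos (hposA i).ne' (measure_ne_top μ _)
  -- h2 in real form, denominators cleared
  have h2' : ∀ i j : Bool, m i j * w j = r j * q i j := by
    intro i j
    have := congrArg ENNReal.toReal (h2 e i j)
    rw [cond_toReal_aux μ (hSs j), ENNReal.toReal_mul,
      cond_toReal_aux μ (hSs j), cond_toReal_aux μ (hSs j)] at this
    have hw := (hwpos j).ne'
    rw [div_mul_div_comm, div_eq_div_iff hw (mul_ne_zero hw hw)] at this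
    simp only [hm_def, hr_def, hq_def, hw_def]
    exact mul_right_cancel₀ hw (by linear_combination this)
  -- q sums to c
  have hqc : ∀ i : Bool, q i true + q i false = c i := by
    intro i
    have hs : ∀ j : Bool,
        ({ω | A' ω = i} ∩ {ω | Y ω = true}) ∩ {ω | Atil ω = j}
          = ({ω | Atil ω = j} ∩ {ω | Y ω = true}) ∩ {ω | A' ω = i} := by
      intro j
      ext ω
      simp only [Set.mem_inter_iff, Set.mem_setOf_eq]
      tauto
    have := split ({ω | A' ω = i} ∩ {ω | Y ω = true})
    rw [hs true, hs false] at this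
    have := congrArg ENNReal.toReal this
    rw [ENNReal.toReal_add (measure_ne_top μ _) (measure_ne_top μ _)] at this
    simp only [hq_def, hc_def]
    linarith [this]
  -- n i = m i true + m i false, where n i is μ (Ci ∩ E)
  have hnm : ∀ i : Bool,
      (μ (({ω | A' ω = i} ∩ {ω | Y ω = true}) ∩ {ω | E ω = e})).toReal
        = m i true + m i false := by
    intro i
    have hs : ∀ j : Bool,
        (({ω | A' ω = i} ∩ {ω | Y ω = true}) ∩ {ω | E ω = e}) ∩ {ω | Atil ω = j}
          = ({ω | Atil ω = j} ∩ {ω | Y ω = true}) ∩ ({ω | E ω = e} ∩ {ω | A' ω = i}) := by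
      intro j
      ext ω
      simp only [Set.mem_inter_iff, Set.mem_setOf_eq]
      tauto
    have := split ((({ω | A' ω = i} ∩ {ω | Y ω = true}) ∩ {ω | E ω = e}))
    rw [hs true, hs false] at this
    have := congrArg ENNReal.toReal this
    rw [ENNReal.toReal_add (measure_ne_top μ _) (measure_ne_top μ _)] at this
    simp only [hm_def]
    linarith [this]
  -- h3 in real form
  have h3' : (m true true + m true false) * c false = (m false true + m false false) * c true := by
    have := congrArg ENNReal.toReal (h3 e)
    rw [cond_toReal_aux μ (hCs true), cond_toReal_aux μ (hCs false),
      hnm true, hnm false] at this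
    have h1 := (hcpos true).ne'
    have h2 := (hcpos false).ne'
    rw [div_eq_div_iff h1 h2] at this
    linarith [this]
  -- h1 in real form
  have h1' : q true true * c false ≠ q false true * c true := by
    intro hcontra
    apply h1
    have hct : ({ω | A' ω = true} ∩ {ω | Y ω = true}) ∩ {ω | Atil ω = true}
        = ({ω | Atil ω = true} ∩ {ω | Y ω = true}) ∩ {ω | A' ω = true} := by
      ext ω; simp only [Set.mem_inter_iff, Set.mem_setOf_eq]; tauto
    have hcf : ({ω | A' ω = false} ∩ {ω | Y ω = true}) ∩ {ω | Atil ω = true}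
        = ({ω | Atil ω = true} ∩ {ω | Y ω = true}) ∩ {ω | A' ω = false} := by
      ext ω; simp only [Set.mem_inter_iff, Set.mem_setOf_eq]; tauto
    rw [← ENNReal.toReal_eq_toReal_iff'
      (cond_ne_top_aux μ (hCs true) (hposA true).ne' _)
      (cond_ne_top_aux μ (hCs false) (hposA false).ne' _),
      cond_toReal_aux μ (hCs true), cond_toReal_aux μ (hCs false), hct, hcf]
    have h1 := (hcpos true).ne'
    have h2 := (hcpos false).ne'
    rw [div_eq_div_iff (hcpos true).ne' (hcpos false).ne']
    exact hcontra
  -- key algebraic identity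
  have key : (r true * w false - r false * w true) * (q true true * c false - q false true * c true) = 0 := by
    have e1 := h2' true true
    have e2 := h2' true false
    have e3 := h2' false true
    have e4 := h2' false false
    have hqT := hqc true
    have hqF := hqc false
    linear_combination (w true * w false) * h3' - (w false * c false) * e1
      - (w true * c false) * e2 + (w false * c true) * e3 + (w true * c true) * e4
      - (r false * w true * c false) * hqT + (r false * w true * c true) * hqF
  have hfac : r true * w false - r false * w true = 0 := by
    rcases mul_eq_zero.mp key with h | h
    · exact h
    · exact absurd (sub_eq_zero.mp h) h1'
  -- conclude
  rw [← ENNReal.toReal_eq_toReal_iff'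
    (cond_ne_top_aux μ (hSs true) (hposAtil true).ne' _)
    (cond_ne_top_aux μ (hSs false) (hposAtil false).ne' _),
    cond_toReal_aux μ (hSs true), cond_toReal_aux μ (hSs false)]
  rw [div_eq_div_iff (hwpos true).ne' (hwpos false).ne']
  have : r true * w false = r false * w true := by linarith [hfac]
  simpa [hr_def, hw_def] using this
end

section
/- Let (Ω, μ) be a probability space, ℰ a finite type, E : Ω → ℰ, A' : Ω → Bool, Ã : Ω → Bool, Y : Ω → Bool random variables, g : ℰ → Bool, and define the prediction Ŷ = g ∘ E. Assume: (pos) for every i ∈ Bool, μ(A' = i ∧ Y = true) > 0, and for every j ∈ Bool, μ(Ã = j ∧ Y = true) > 0; (1) μ(Ã = true | A' = true ∧ Y = true) ≠ μ(Ã = true | A' = false ∧ Y = true); (2) for all e ∈ ℰ and i, j ∈ Bool, μ(E = e ∧ A' = i | Ã = j ∧ Y = true) = μ(E = e | Ã = j ∧ Y = true) · μ(A' = i | Ã = j ∧ Y = true); (3) for all e ∈ ℰ, μ(E = e | A' = true ∧ Y = true) = μ(E = e | A' = false ∧ Y = true). Then the prediction achieves Equal Opportunity with respect to the ground-truth sensitive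 attribute: μ(Ŷ = true | Ã = true ∧ Y = true) = μ(Ŷ = true | Ã = false ∧ Y = true). -/
open MeasureTheory ProbabilityTheory
open scoped ENNReal

/-- Under hypotheses (1) non-random correction on the positive class, (2)
conditional independence of `E` and `A'` given `Ã` on the positive class, and
(3) the adversarial global optimum (representation distributions agree across
corrected-attribute groups on the positive class), the prediction `Ŷ = g ∘ E`
achieves Equal Opportunity with respect to the ground-truth attribute `Ã`. -/
theorem stmt_10 {Ω : Type*} [MeasurableSpace Ω] (μ : Measure Ω) [IsProbabilityMeasure μ]
    {ℰ : Type*} [Fintype ℰ] [MeasurableSpace ℰ] [MeasurableSingletonClass ℰ]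
    (E : Ω → ℰ) (A' : Ω → Bool) (Atil : Ω → Bool) (Y : Ω → Bool)
    (hE : Measurable E) (hA' : Measurable A') (hAtil : Measurable Atil)
    (hY : Measurable Y)
    (g : ℰ → Bool) (Yhat : Ω → Bool) (hYhat : Yhat = g ∘ E)
    (hposA : ∀ i : Bool, 0 < μ ({ω | A' ω = i} ∩ {ω | Y ω = true}))
    (hposAtil : ∀ j : Bool, 0 < μ ({ω | Atil ω = j} ∩ {ω | Y ω = true}))
    (h1 : (μ[|{ω | A' ω = true} ∩ {ω | Y ω = true}]) {ω | Atil ω = true}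
        ≠ (μ[|{ω | A' ω = false} ∩ {ω | Y ω = true}]) {ω | Atil ω = true})
    (h2 : ∀ (e : ℰ) (i j : Bool),
      (μ[|{ω | Atil ω = j} ∩ {ω | Y ω = true}]) ({ω | E ω = e} ∩ {ω | A' ω = i})
        = (μ[|{ω | Atil ω = j} ∩ {ω | Y ω = true}]) {ω | E ω = e}
          * (μ[|{ω | Atil ω = j} ∩ {ω | Y ω = true}]) {ω | A' ω = i})
    (h3 : ∀ e : ℰ,
      (μ[|{ω | A' ω = true} ∩ {ω | Y ω = true}]) {ω | E ω = e}
        = (μ[|{ω | A' ω = false} ∩ {ω | Y ω = true}]) {ω | E ω = e}) :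
    (μ[|{ω | Atil ω = true} ∩ {ω | Y ω = true}]) {ω | Yhat ω = true}
      = (μ[|{ω | Atil ω = false} ∩ {ω | Y ω = true}]) {ω | Yhat ω = true} := by
  subst hYhat
  -- measurable sets
  have hSY : MeasurableSet {ω | Y ω = true} := hY (measurableSet_singleton true)
  have hSA : ∀ i : Bool, MeasurableSet {ω | A' ω = i} :=
    fun i => hA' (measurableSet_singleton i)
  have hST : ∀ j : Bool, MeasurableSet {ω | Atil ω = j} :=
    fun j => hAtil (measurableSet_singleton j)
  have hSE : ∀ e : ℰ, MeasurableSet {ω | E ω = e} :=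
    fun e => hE (measurableSet_singleton e)
  -- real-valued measure
  set P : Set Ω → ℝ := fun s => (μ s).toReal with hPdef
  have hPfin : ∀ s : Set Ω, μ s ≠ ⊤ := fun s => measure_ne_top μ s
  have hPadd : ∀ (A : Set Ω) (j : Bool), P A = P (A ∩ {ω | Atil ω = true}) + P (A ∩ {ω | Atil ω = false}) := by
    intro A j
    have hdiff : A \ {ω | Atil ω = true} = A ∩ {ω | Atil ω = false} := by
      ext ω; simp [Set.mem_diff, Bool.not_eq_true]
    have := measure_inter_add_diff (μ := μ) A (hST true)
    rw [hdiff] at this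
    simp only [hPdef]
    rw [← ENNReal.toReal_add (hPfin _) (hPfin _), this]
  have hcond : ∀ (s t : Set Ω), MeasurableSet s → (μ[|s] t).toReal = P (s ∩ t) / P s := by
    intro s t hs
    rw [cond_apply hs, ENNReal.toReal_mul, ENNReal.toReal_inv]
    simp only [hPdef]; ring
  have hcondfin : ∀ (s t : Set Ω), MeasurableSet s → μ s ≠ 0 → μ[|s] t ≠ ⊤ := by
    intro s t hms hs0
    rw [cond_apply hms]
    exact ENNReal.mul_ne_top (ENNReal.inv_ne_top.mpr hs0) (hPfin _)
  -- abbreviations for masses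
  set m : Bool → ℝ := fun j => P ({ω | Atil ω = j} ∩ {ω | Y ω = true}) with hm
  set c : Bool → ℝ := fun i => P ({ω | A' ω = i} ∩ {ω | Y ω = true}) with hc
  have hm0 : ∀ j, μ ({ω | Atil ω = j} ∩ {ω | Y ω = true}) ≠ 0 := fun j => (hposAtil j).ne'
  have hc0 : ∀ i, μ ({ω | A' ω = i} ∩ {ω | Y ω = true}) ≠ 0 := fun i => (hposA i).ne'
  have hmpos : ∀ j, 0 < m j := by
    intro j
    exact ENNReal.toReal_pos (hm0 j) (hPfin _)
  have hcpos : ∀ i, 0 < c i := by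
    intro i
    exact ENNReal.toReal_pos (hc0 i) (hPfin _)
  set q : Bool → ℰ → ℝ := fun j e => P (({ω | Atil ω = j} ∩ {ω | Y ω = true}) ∩ {ω | E ω = e}) with hq
  set b : Bool → Bool → ℝ := fun i j => P (({ω | A' ω = i} ∩ {ω | Y ω = true}) ∩ {ω | Atil ω = j}) with hb
  -- (2) in real, cross-multiplied form:
  -- P((ST j ∩ SY) ∩ (SE e ∩ SA i)) = q j e * (b i j) / m j
  have h2R : ∀ (e : ℰ) (i j : Bool),
      P (({ω | Atil ω = j} ∩ {ω | Y ω = true}) ∩ ({ω | E ω = e} ∩ {ω | A' ω = i}))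
        = q j e * b i j / m j := by
    intro e i j
    have := congrArg ENNReal.toReal (h2 e i j)
    rw [ENNReal.toReal_mul, hcond _ _ ((hST j).inter hSY), hcond _ _ ((hST j).inter hSY),
      hcond _ _ ((hST j).inter hSY)] at this
    have hset : ({ω | Atil ω = j} ∩ {ω | Y ω = true}) ∩ {ω | A' ω = i}
        = ({ω | A' ω = i} ∩ {ω | Y ω = true}) ∩ {ω | Atil ω = j} := by
      ext ω; simp only [Set.mem_inter_iff, Set.mem_setOf_eq]; tauto
    rw [hset] at this
    have hmne := (hmpos j).ne'
    rw [eq_div_iff hmne]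
    have hmne' : P ({ω | Atil ω = j} ∩ {ω | Y ω = true}) ≠ 0 := hmne
    rw [div_mul_div_comm, div_eq_div_iff hmne' (mul_ne_zero hmne' hmne')] at this
    apply mul_right_cancel₀ hmne
    simp only [hm, hq, hb]
    linear_combination this
  -- decomposition: P((SA i ∩ SY) ∩ SE e) = q T e * b i T / m T + q F e * b i F / m F
  have hdec : ∀ (e : ℰ) (i : Bool),
      P (({ω | A' ω = i} ∩ {ω | Y ω = true}) ∩ {ω | E ω = e})
        = q true e * b i true / m true + q false e * b i false / m false := by
    intro e i
    rw [hPadd (({ω | A' ω = i} ∩ {ω | Y ω = true}) ∩ {ω | E ω = e}) true]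
    have hsetT : (({ω | A' ω = i} ∩ {ω | Y ω = true}) ∩ {ω | E ω = e}) ∩ {ω | Atil ω = true}
        = ({ω | Atil ω = true} ∩ {ω | Y ω = true}) ∩ ({ω | E ω = e} ∩ {ω | A' ω = i}) := by
      ext ω; simp only [Set.mem_inter_iff, Set.mem_setOf_eq]; tauto
    have hsetF : (({ω | A' ω = i} ∩ {ω | Y ω = true}) ∩ {ω | E ω = e}) ∩ {ω | Atil ω = false}
        = ({ω | Atil ω = false} ∩ {ω | Y ω = true}) ∩ ({ω | E ω = e} ∩ {ω | A' ω = i}) := by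
      ext ω; simp only [Set.mem_inter_iff, Set.mem_setOf_eq]; tauto
    rw [hsetT, hsetF, h2R e i true, h2R e i false]
  -- b i true + b i false = c i
  have hbsum : ∀ i : Bool, b i true + b i false = c i := by
    intro i
    have := hPadd ({ω | A' ω = i} ∩ {ω | Y ω = true}) true
    linarith [this]
  -- (1) in real form
  have h1R : b true true / c true ≠ b false true / c false := by
    intro hEq
    apply h1
    have hT := hcond _ {ω | Atil ω = true} ((hSA true).inter hSY)
    have hF := hcond _ {ω | Atil ω = true} ((hSA false).inter hSY)
    have : ((μ[|{ω | A' ω = true} ∩ {ω | Y ω = true}]) {ω | Atil ω = true}).toReal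
        = ((μ[|{ω | A' ω = false} ∩ {ω | Y ω = true}]) {ω | Atil ω = true}).toReal := by
      rw [hT, hF]; exact hEq
    exact (ENNReal.toReal_eq_toReal_iff' (hcondfin _ _ ((hSA true).inter hSY) (hc0 true)) (hcondfin _ _ ((hSA false).inter hSY) (hc0 false))).mp this
  -- (3) in real form
  have h3R : ∀ e : ℰ,
      P (({ω | A' ω = true} ∩ {ω | Y ω = true}) ∩ {ω | E ω = e}) / c true
        = P (({ω | A' ω = false} ∩ {ω | Y ω = true}) ∩ {ω | E ω = e}) / c false := by
    intro e
    have := congrArg ENNReal.toReal (h3 e)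
    rwa [hcond _ _ ((hSA true).inter hSY), hcond _ _ ((hSA false).inter hSY)] at this
  -- key: conditional laws of E given Atil agree on the positive class
  have key : ∀ e : ℰ,
      (μ[|{ω | Atil ω = true} ∩ {ω | Y ω = true}]) {ω | E ω = e}
        = (μ[|{ω | Atil ω = false} ∩ {ω | Y ω = true}]) {ω | E ω = e} := by
    intro e
    set x := q true e / m true with hx
    set y := q false e / m false with hy
    have hE1 : (x * b true true + y * b true false) / c true
        = (x * b false true + y * b false false) / c false := by
      have hT := hdec e true
      have hF := hdec e false
      have h3' := h3R e
      rw [hT, hF] at h3'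
      simp only [hx, hy]
      linear_combination h3'
    have hE1' : (x * b true true + y * b true false) * c false
        = (x * b false true + y * b false false) * c true := by
      exact (div_eq_div_iff (hcpos true).ne' (hcpos false).ne').mp hE1
    have h0 : (x - y) * (b true true * c false - b false true * c true) = 0 := by
      have hsT := hbsum true
      have hsF := hbsum false
      linear_combination hE1' - y * c false * hsT + y * c true * hsF
    have hne : b true true * c false - b false true * c true ≠ 0 := by
      intro h
      apply h1R
      rw [div_eq_div_iff (hcpos true).ne' (hcpos false).ne']
      linarith [h]
    have hxy : x = y := by
      rcases mul_eq_zero.mp h0 with h | h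
      · linarith [h]
      · exact absurd h hne
    have hTreal := hcond _ {ω | E ω = e} ((hST true).inter hSY)
    have hFreal := hcond _ {ω | E ω = e} ((hST false).inter hSY)
    apply (ENNReal.toReal_eq_toReal_iff' (hcondfin _ _ ((hST true).inter hSY) (hm0 true)) (hcondfin _ _ ((hST false).inter hSY) (hm0 false))).mp
    rw [hTreal, hFreal]
    simpa [hx, hy, hq, hm] using hxy
  -- conclude by summing over {e | g e = true}
  have hset : ∀ j : Bool, {ω | (g ∘ E) ω = true}
      = ⋃ e ∈ Finset.filter (fun e => g e = true) Finset.univ, {ω | E ω = e} := by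
    intro j
    ext ω
    simp only [Set.mem_setOf_eq, Function.comp_apply, Set.mem_iUnion, Finset.mem_filter,
      Finset.mem_univ, true_and]
    constructor
    · intro h; exact ⟨E ω, h, rfl⟩
    · rintro ⟨e, he, rfl⟩; exact he
  have hdisj : (↑(Finset.filter (fun e => g e = true) Finset.univ) : Set ℰ).PairwiseDisjoint
      (fun e => {ω | E ω = e}) := by
    intro a _ b _ hab
    refine Set.disjoint_left.mpr ?_
    intro ω ha hb
    exact hab (ha.symm.trans hb)
  have hsum : ∀ j : Bool,
      (μ[|{ω | Atil ω = j} ∩ {ω | Y ω = true}]) {ω | (g ∘ E) ω = true}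
        = ∑ e ∈ Finset.filter (fun e => g e = true) Finset.univ,
            (μ[|{ω | Atil ω = j} ∩ {ω | Y ω = true}]) {ω | E ω = e} := by
    intro j
    rw [hset j]
    exact measure_biUnion_finset hdisj (fun e _ => hSE e)
  rw [hsum true, hsum false]
  exact Finset.sum_congr rfl (fun e _ => key e)
end

section
/- Let 𝒳 be a finite type, p, q : 𝒳 → ℝ nonnegative functions with p x + q x > 0 for every x, and D : 𝒳 → ℝ with 0 < D x < 1 for every x. Then Σ_{x ∈ 𝒳} (p x · log(D x) + q x · log(1 − D x)) ≤ Σ_{x ∈ 𝒳} (p x · log(p x/(p x + q x)) + q x · log(q x/(p x + q x))), where any summand with zero coefficient p x or q x is interpreted as 0. -/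
lemma pointwise_opt (a b t : ℝ) (ha : 0 ≤ a) (hb : 0 ≤ b) (hab : 0 < a + b)
    (ht0 : 0 < t) (ht1 : t < 1) :
    a * Real.log t + b * Real.log (1 - t)
      ≤ a * Real.log (a / (a + b)) + b * Real.log (b / (a + b)) := by
  have h1t : 0 < 1 - t := by linarith
  rcases ha.eq_or_lt with ha0 | ha0
  · -- a = 0
    have hb0 : 0 < b := by linarith
    rw [← ha0]
    simp only [zero_mul, zero_add]
    rw [div_self (ne_of_gt hb0), Real.log_one, mul_zero]
    have : Real.log (1 - t) ≤ 0 := Real.log_nonpos (by linarith) (by linarith)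
    nlinarith
  rcases hb.eq_or_lt with hb0 | hb0
  · rw [← hb0]
    simp only [zero_mul, add_zero]
    rw [div_self (ne_of_gt ha0), Real.log_one, mul_zero]
    have : Real.log t ≤ 0 := Real.log_nonpos (le_of_lt ht0) (by linarith)
    nlinarith
  -- main case a, b > 0
  have key1 : Real.log t - Real.log (a / (a + b)) ≤ t * (a + b) / a - 1 := by
    rw [← Real.log_div (ne_of_gt ht0) (ne_of_gt (div_pos ha0 hab))]
    have : t / (a / (a + b)) = t * (a + b) / a := by field_simp
    rw [this]
    exact Real.log_le_sub_one_of_pos (by positivity)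
  have key2 : Real.log (1 - t) - Real.log (b / (a + b)) ≤ (1 - t) * (a + b) / b - 1 := by
    rw [← Real.log_div (ne_of_gt h1t) (ne_of_gt (div_pos hb0 hab))]
    have : (1 - t) / (b / (a + b)) = (1 - t) * (a + b) / b := by field_simp
    rw [this]
    exact Real.log_le_sub_one_of_pos (by positivity)
  have e1 : a * (t * (a + b) / a - 1) = t * (a + b) - a := by field_simp
  have e2 : b * ((1 - t) * (a + b) / b - 1) = (1 - t) * (a + b) - b := by field_simp
  nlinarith [mul_le_mul_of_nonneg_left key1 (le_of_lt ha0),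
    mul_le_mul_of_nonneg_left key2 (le_of_lt hb0)]

/-- Optimal-adversary lemma for the adversarial debiasing objective: for
nonnegative `p q : 𝒳 → ℝ` with `p x + q x > 0` and any adversary `D` with values
in `(0,1)`, the objective is at most its value at `D*(x) = p x / (p x + q x)`. -/
theorem stmt_13 {𝒳 : Type*} [Fintype 𝒳] (p q : 𝒳 → ℝ)
    (hp : ∀ x, 0 ≤ p x) (hq : ∀ x, 0 ≤ q x) (hpq : ∀ x, 0 < p x + q x)
    (D : 𝒳 → ℝ) (hD : ∀ x, 0 < D x ∧ D x < 1) :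
    ∑ x : 𝒳, (p x * Real.log (D x) + q x * Real.log (1 - D x))
      ≤ ∑ x : 𝒳, (p x * Real.log (p x / (p x + q x))
          + q x * Real.log (q x / (p x + q x))) := by
  apply Finset.sum_le_sum
  intro x _
  exact pointwise_opt (p x) (q x) (D x) (hp x) (hq x) (hpq x) (hD x).1 (hD x).2
end

section
/- Let 𝒳 be a finite type and p, q : 𝒳 → ℝ nonnegative with Σ_{x} p x = 1, Σ_{x} q x = 1, and p x + q x > 0 for every x. Then Σ_{x ∈ 𝒳} (p x · log(p x/(p x + q x)) + q x · log(q x/(p x + q x))) ≥ −2·log 2 (summands with zero coefficient interpreted as 0), and equality holds if and only if p x = q x for every x ∈ 𝒳. -/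
open Real

lemma aux_le (a b : ℝ) (ha : 0 ≤ a) (hb : 0 < b) :
    a - b ≤ a * Real.log (a / b) := by
  rcases ha.eq_or_lt with h | h
  · simp [← h]; linarith
  · have hba : 0 < b / a := by positivity
    have hlog : Real.log (b / a) ≤ b / a - 1 := Real.log_le_sub_one_of_pos hba
    have hinv : Real.log (a / b) = - Real.log (b / a) := by
      rw [← Real.log_inv]; congr 1; field_simp
    rw [hinv]
    have : a * Real.log (b / a) ≤ a * (b / a - 1) :=
      mul_le_mul_of_nonneg_left hlog ha
    have hab : a * (b / a) = b := by field_simp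
    nlinarith

lemma aux_eq (a b : ℝ) (ha : 0 ≤ a) (hb : 0 < b)
    (h : a * Real.log (a / b) = a - b) : a = b := by
  rcases ha.eq_or_lt with h0 | h0
  · exfalso; rw [← h0] at h; simp at h; linarith
  · by_contra hne
    have hba : 0 < b / a := by positivity
    have hba1 : b / a ≠ 1 := by
      intro h1
      apply hne
      field_simp at h1
      linarith
    have hlog : Real.log (b / a) < b / a - 1 := Real.log_lt_sub_one_of_pos hba hba1
    have hinv : Real.log (a / b) = - Real.log (b / a) := by
      rw [← Real.log_inv]; congr 1; field_simp
    have : a * Real.log (b / a) < a * (b / a - 1) :=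
      (mul_lt_mul_iff_right₀ h0).mpr hlog
    have hab : a * (b / a) = b := by field_simp
    rw [hinv] at h
    nlinarith

/-- Value of the adversarial debiasing game at the optimal adversary: for
probability vectors `p q` with `p x + q x > 0`,
`∑ x, (p x * log (p x/(p x + q x)) + q x * log (q x/(p x + q x))) ≥ -2 log 2`,
with equality iff `p = q`. -/
theorem stmt_14 {𝒳 : Type*} [Fintype 𝒳] (p q : 𝒳 → ℝ)
    (hp : ∀ x, 0 ≤ p x) (hq : ∀ x, 0 ≤ q x)
    (hp1 : ∑ x : 𝒳, p x = 1) (hq1 : ∑ x : 𝒳, q x = 1)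
    (hpq : ∀ x, 0 < p x + q x) :
    (-2 * Real.log 2
      ≤ ∑ x : 𝒳, (p x * Real.log (p x / (p x + q x))
          + q x * Real.log (q x / (p x + q x)))) ∧
    ((∑ x : 𝒳, (p x * Real.log (p x / (p x + q x))
          + q x * Real.log (q x / (p x + q x))) = -2 * Real.log 2)
      ↔ ∀ x : 𝒳, p x = q x) := by
  set m : 𝒳 → ℝ := fun x => (p x + q x) / 2 with hm
  have hmpos : ∀ x, 0 < m x := fun x => by have := hpq x; simp [hm]; linarith
  set T : 𝒳 → ℝ := fun x => p x * Real.log (p x / m x) + q x * Real.log (q x / m x)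
    with hT
  -- pointwise identity
  have hid : ∀ x, p x * Real.log (p x / (p x + q x))
      + q x * Real.log (q x / (p x + q x)) = T x - (p x + q x) * Real.log 2 := by
    intro x
    have key : ∀ a : ℝ, 0 ≤ a → a * Real.log (a / m x)
        = a * Real.log (a / (p x + q x)) + a * Real.log 2 := by
      intro a ha
      rcases ha.eq_or_lt with h0 | h0
      · simp [← h0]
      · have hpq' := hpq x
        have : a / m x = (a / (p x + q x)) * 2 := by
          simp only [hm]; field_simp
        rw [this, Real.log_mul (by positivity) (by norm_num)]
        ring
    simp only [hT]
    rw [key (p x) (hp x), key (q x) (hq x)]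
    ring
  have hTnn : ∀ x, 0 ≤ T x := by
    intro x
    have h1 := aux_le (p x) (m x) (hp x) (hmpos x)
    have h2 := aux_le (q x) (m x) (hq x) (hmpos x)
    have : p x - m x + (q x - m x) = 0 := by simp only [hm]; ring
    simp only [hT]; linarith
  have hsum : ∑ x : 𝒳, (p x * Real.log (p x / (p x + q x))
      + q x * Real.log (q x / (p x + q x)))
      = (∑ x : 𝒳, T x) - 2 * Real.log 2 := by
    have h2 : ∑ i : 𝒳, (p i + q i) = 2 := by
      rw [Finset.sum_add_distrib, hp1, hq1]; norm_num
    rw [Finset.sum_congr rfl (fun x _ => hid x), Finset.sum_sub_distrib,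
      ← Finset.sum_mul, h2]
  have hTsum_nn : 0 ≤ ∑ x : 𝒳, T x := Finset.sum_nonneg fun x _ => hTnn x
  constructor
  · rw [hsum]; linarith
  · rw [hsum]
    constructor
    · intro h
      have hT0 : ∑ x : 𝒳, T x = 0 := by linarith
      rw [Finset.sum_eq_zero_iff_of_nonneg (fun x _ => hTnn x)] at hT0
      intro x
      have hx := hT0 x (Finset.mem_univ x)
      have h1 := aux_le (p x) (m x) (hp x) (hmpos x)
      have h2 := aux_le (q x) (m x) (hq x) (hmpos x)
      have hsum0 : p x - m x + (q x - m x) = 0 := by simp only [hm]; ring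
      have hpe : p x * Real.log (p x / m x) = p x - m x := by
        simp only [hT] at hx; linarith
      have := aux_eq (p x) (m x) (hp x) (hmpos x) hpe
      simp only [hm] at this; linarith
    · intro h
      have : ∀ x, T x = 0 := by
        intro x
        have hpx : p x = q x := h x
        have hmx : m x = p x := by simp only [hm, ← hpx]; ring
        have hp0 : 0 < p x := by have := hpq x; rw [← hpx] at this; linarith
        simp only [hT, hmx, ← hpx, div_self (ne_of_gt hp0), Real.log_one,
          mul_zero, add_zero]
      have : ∑ x : 𝒳, T x = 0 := Finset.sum_eq_zero fun x _ => this x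
      rw [this]; ring
end
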